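/- Let s, z : (0,∞) → ℝ with s continuous and z twice differentiable, satisfying z'' + z'/r − z/r² − z s² = 0 on (0,∞). Assume there exists a > 0 with z(r) > 0 for all r ∈ (0,a), and z(r) → 0 as r → ∞. Then z(r) > 0 for all r > 0. -/

import Mathlib

open Set Filter Topology

/-!
Written as `z'' = -z'/r + (1/r² + s²) z`, the equation has a positive coefficient in front of `z`.
At a negative interior minimum of `z` this forces `z'' < 0`, contradicting the second-order
condition for a minimum; since `z > 0` near `0` and `z → 0` at infinity, `z` is therefore
nonnegative. A zero `r₀ > 0` of `z` is then a minimum, so `z'(r₀) = 0` as well, and uniqueness for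
the linear ODE (whose coefficients are continuous on compact subintervals of `(0,∞)`) makes `z`
vanish identically on `[a/2, r₀]`, contradicting `z > 0` near `0`.
-/

theorem IsLocalMin.nonneg_of_hasDerivAt_of_hasDerivAt {f f' : ℝ → ℝ} {x f'' : ℝ}
    (hmin : IsLocalMin f x) (hf : ∀ᶠ y in 𝓝 x, HasDerivAt f (f' y) y)
    (hf' : HasDerivAt f' f'' x) : 0 ≤ f'' := by
  by_contra! hneg
  have hderiv : deriv f =ᶠ[𝓝 x] f' := hf.mono fun y hy ↦ hy.deriv
  have hmax : IsLocalMax f x :=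
    isLocalMax_of_deriv_deriv_neg ((hf'.congr_of_eventuallyEq hderiv).deriv ▸ hneg)
      (hderiv.self_of_nhds.trans (hmin.hasDerivAt_eq_zero hf.self_of_nhds))
      hf.self_of_nhds.continuousAt
  have hconst : f =ᶠ[𝓝 x] fun _ ↦ f x :=
    (hmin.and hmax).mono fun y hy ↦ le_antisymm hy.2 hy.1
  have hzero : f' =ᶠ[𝓝 x] fun _ ↦ 0 := by
    filter_upwards [hderiv, hconst.deriv] with y h1 h2
    rw [← h1, h2, deriv_const]
  exact hneg.ne ((hf'.congr_of_eventuallyEq hzero.symm).unique (hasDerivAt_const x 0))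

theorem exists_isLocalMin_neg_of_tendsto_atTop {f : ℝ → ℝ} {b c : ℝ}
    (hf : ContinuousOn f (Ici b)) (hb : 0 ≤ f b) (hbc : b ≤ c) (hc : f c < 0)
    (hlim : Tendsto f atTop (𝓝 0)) : ∃ x, b < x ∧ IsLocalMin f x ∧ f x < 0 := by
  obtain ⟨R, hR, hcR⟩ :=
    ((hlim.eventually (lt_mem_nhds hc)).and (eventually_ge_atTop c)).exists
  obtain ⟨x, hx, hmin⟩ := isCompact_Icc.exists_isMinOn (nonempty_Icc.2 (hbc.trans hcR))
    (hf.mono Icc_subset_Ici_self)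
  have hxc : f x ≤ f c := hmin ⟨hbc, hcR⟩
  have hbx : b < x := hx.1.lt_of_ne (by rintro rfl; linarith)
  have hxR : x < R := hx.2.lt_of_ne (by rintro rfl; linarith)
  exact ⟨x, hbx, hmin.isLocalMin (Icc_mem_nhds hbx hxR), hxc.trans_lt hc⟩

theorem lipschitzWith_companion_system {α β : ℝ} (P Q : ℝ) (hα : ‖α‖ ≤ P) (hβ : ‖β‖ ≤ Q) :
    LipschitzWith (Real.toNNReal (1 + P + Q))
      (fun u : ℝ × ℝ ↦ (u.2, α * u.2 + β * u.1)) := by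
  refine LipschitzWith.of_dist_le_mul fun u v ↦ ?_
  have h1 : dist u.1 v.1 ≤ dist u v := le_max_left _ _
  have h2 : dist u.2 v.2 ≤ dist u v := le_max_right _ _
  have hP : 0 ≤ P := (norm_nonneg _).trans hα
  have hQ : 0 ≤ Q := (norm_nonneg _).trans hβ
  rw [Real.coe_toNNReal _ (by positivity), Prod.dist_eq]
  refine max_le (by nlinarith [dist_nonneg (x := u) (y := v)]) ?_
  calc dist (α * u.2 + β * u.1) (α * v.2 + β * v.1)
      = ‖α * (u.2 - v.2) + β * (u.1 - v.1)‖ := by rw [dist_eq_norm]; ring_nf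
    _ ≤ ‖α‖ * dist u.2 v.2 + ‖β‖ * dist u.1 v.1 := by
        simpa only [norm_mul, ← dist_eq_norm] using
          norm_add_le (α * (u.2 - v.2)) (β * (u.1 - v.1))
    _ ≤ (1 + P + Q) * dist u v := by
        nlinarith [norm_nonneg α, norm_nonneg β, dist_nonneg (x := u) (y := v)]

theorem eqOn_zero_of_linear_ode {p q z z' z'' : ℝ → ℝ} {b c : ℝ}
    (hp : ContinuousOn p (Icc b c)) (hq : ContinuousOn q (Icc b c))
    (hz : ∀ t ∈ Icc b c, HasDerivAt z (z' t) t) (hz' : ∀ t ∈ Icc b c, HasDerivAt z' (z'' t) t)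
    (hode : ∀ t ∈ Icc b c, z'' t = p t * z' t + q t * z t) (hc : z c = 0) (hc' : z' c = 0) :
    EqOn z 0 (Icc b c) := by
  obtain ⟨P, hP⟩ := isCompact_Icc.exists_bound_of_continuousOn hp
  obtain ⟨Q, hQ⟩ := isCompact_Icc.exists_bound_of_continuousOn hq
  have hlip : ∀ t ∈ Ioc b c, LipschitzOnWith (Real.toNNReal (1 + P + Q))
      (fun u : ℝ × ℝ ↦ (u.2, p t * u.2 + q t * u.1)) univ := fun t ht ↦
    (lipschitzWith_companion_system P Q (hP t (Ioc_subset_Icc_self ht))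
      (hQ t (Ioc_subset_Icc_self ht))).lipschitzOnWith
  have hsol : ∀ t ∈ Icc b c,
      HasDerivAt (fun t ↦ (z t, z' t)) (z' t, p t * z' t + q t * z t) t :=
    fun t ht ↦ hode t ht ▸ (hz t ht).prodMk (hz' t ht)
  have hzero : EqOn (fun t ↦ (z t, z' t)) (fun _ ↦ 0) (Icc b c) :=
    ODE_solution_unique_of_mem_Icc_left hlip
      (fun t ht ↦ (hsol t ht).continuousAt.continuousWithinAt)
      (fun t ht ↦ (hsol t (Ioc_subset_Icc_self ht)).hasDerivWithinAt) (fun _ _ ↦ mem_univ _)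
      continuousOn_const
      (fun t _ ↦ by simpa [← Prod.zero_eq_mk] using hasDerivWithinAt_const t _ (0 : ℝ × ℝ))
      (fun _ _ ↦ mem_univ _) (by simp [hc, hc'])
  exact fun t ht ↦ congrArg Prod.fst (hzero ht)

section Vortex

variable {s z z' z'' : ℝ → ℝ}

theorem vortex_eq_linear_ode
    (heq : ∀ r ∈ Ioi (0:ℝ), z'' r + z' r / r - z r / r ^ 2 - z r * s r ^ 2 = 0)
    {r : ℝ} (hr : r ∈ Ioi (0:ℝ)) :
    z'' r = -r⁻¹ * z' r + (r⁻¹ ^ 2 + s r ^ 2) * z r := by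
  linear_combination heq r hr

theorem vortex_nonneg
    (hz' : ∀ r ∈ Ioi (0:ℝ), HasDerivAt z (z' r) r)
    (hz'' : ∀ r ∈ Ioi (0:ℝ), HasDerivAt z' (z'' r) r)
    (heq : ∀ r ∈ Ioi (0:ℝ), z'' r + z' r / r - z r / r ^ 2 - z r * s r ^ 2 = 0)
    {a : ℝ} (ha : 0 < a) (hpos : ∀ r : ℝ, 0 < r → r < a → 0 < z r)
    (hlim : Tendsto z atTop (𝓝 0)) {r : ℝ} (hr : 0 < r) : 0 ≤ z r := by
  by_contra! hneg
  have har : a / 2 ≤ r := by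
    by_contra! h
    exact (hpos r hr (by linarith)).not_gt hneg
  obtain ⟨x, hax, hmin, hx⟩ := exists_isLocalMin_neg_of_tendsto_atTop
    (fun t ht ↦ (hz' t (show 0 < t by linarith [mem_Ici.1 ht])).continuousAt.continuousWithinAt)
    (hpos (a / 2) (by linarith) (by linarith)).le har hneg hlim
  have hx0 : x ∈ Ioi (0:ℝ) := show 0 < x by linarith
  have hz'x : z' x = 0 := hmin.hasDerivAt_eq_zero (hz' x hx0)
  have hz''x : 0 ≤ z'' x := hmin.nonneg_of_hasDerivAt_of_hasDerivAt
    (eventually_of_mem (Ioi_mem_nhds hx0) hz') (hz'' x hx0)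
  rw [vortex_eq_linear_ode heq hx0, hz'x] at hz''x
  have hcoeff : 0 < x⁻¹ ^ 2 + s x ^ 2 := by have := inv_pos.2 (mem_Ioi.1 hx0); positivity
  linarith [mul_neg_of_pos_of_neg hcoeff hx]

end Vortex

theorem statement1 (s z z' z'' : ℝ → ℝ)
    (hs : ContinuousOn s (Set.Ioi (0:ℝ)))
    (hz' : ∀ r ∈ Set.Ioi (0:ℝ), HasDerivAt z (z' r) r)
    (hz'' : ∀ r ∈ Set.Ioi (0:ℝ), HasDerivAt z' (z'' r) r)
    (heq : ∀ r ∈ Set.Ioi (0:ℝ),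
      z'' r + z' r / r - z r / r ^ 2 - z r * s r ^ 2 = 0)
    (a : ℝ) (ha : 0 < a) (hpos : ∀ r : ℝ, 0 < r → r < a → 0 < z r)
    (hlim : Filter.Tendsto z Filter.atTop (nhds 0)) :
    ∀ r : ℝ, 0 < r → 0 < z r := by
  intro r hr
  have hnonneg : ∀ t, 0 < t → 0 ≤ z t := fun t ht ↦ vortex_nonneg hz' hz'' heq ha hpos hlim ht
  by_contra! hle
  have hzr : z r = 0 := le_antisymm hle (hnonneg r hr)
  have har : a / 2 ≤ r := by
    by_contra! h
    exact (hpos r hr (by linarith)).ne' hzr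
  have hmin : IsLocalMin z r := by
    filter_upwards [Ioi_mem_nhds hr] with t ht
    exact hzr ▸ hnonneg t ht
  have hsub : Icc (a / 2) r ⊆ Ioi 0 := fun t ht ↦ show 0 < t by linarith [ht.1]
  have hinv : ContinuousOn (fun t : ℝ ↦ t⁻¹) (Icc (a / 2) r) :=
    continuousOn_id.inv₀ fun t ht ↦ (hsub ht).ne'
  have hvanish := eqOn_zero_of_linear_ode hinv.neg ((hinv.pow 2).add ((hs.mono hsub).pow 2))
    (fun t ht ↦ hz' t (hsub ht)) (fun t ht ↦ hz'' t (hsub ht))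
    (fun t ht ↦ vortex_eq_linear_ode heq (hsub ht)) hzr (hmin.hasDerivAt_eq_zero (hz' r hr))
    (left_mem_Icc.2 har)
  exact (hpos (a / 2) (by linarith) (by linarith)).ne' hvanish
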